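/- arXiv:2109.08151 — 11 statements merged into one kernel-verified Lean document; each statement's English description precedes it below -/
import Mathlib

section
/- Let a, b, d be natural numbers and let s, t be positive real numbers. Set X = s·((a+db)·(1+s)^d + a·t) / (((1+s)^d + t)·(1+s)) and Y = b·t / ((1+s)^d + t). Then s·(a+db − X − d·Y) = X and t·(a+db − X − d·Y)^d·(b − Y) = (a+db − d·Y)^d·Y. (This says that the map φ(s,t) = (h₁/h₃, (h₁+h₃)^d·h₂ / (h₃^d·h₄)) inverts the composition of the monomial parametrization of the trapezoid model with the tautological map, a key step in the proof of Proposition 3.1.) -/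
/-- The map `φ(s,t) = (h₁/h₃, (h₁+h₃)^d·h₂/(h₃^d·h₄))` inverts the composition of the
monomial parametrization of the trapezoid model with the tautological map
(key step of Proposition 3.1). -/
theorem trapezoid_phi_inverts (a b d : ℕ) (s t : ℝ) (hs : 0 < s) (ht : 0 < t) :
    let X : ℝ := s * (((a : ℝ) + d * b) * (1 + s) ^ d + a * t) / (((1 + s) ^ d + t) * (1 + s))
    let Y : ℝ := (b : ℝ) * t / ((1 + s) ^ d + t)
    s * ((a : ℝ) + d * b - X - d * Y) = X ∧
      t * ((a : ℝ) + d * b - X - d * Y) ^ d * ((b : ℝ) - Y) =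
        ((a : ℝ) + d * b - d * Y) ^ d * Y := by
  intro X Y
  have h1s : (0:ℝ) < 1 + s := by linarith
  have hP : (0:ℝ) < (1 + s) ^ d := pow_pos h1s d
  have hQ : (0:ℝ) < (1 + s) ^ d + t := by linarith
  have hQ' : ((1:ℝ) + s) ^ d + t ≠ 0 := ne_of_gt hQ
  have h1s' : (1:ℝ) + s ≠ 0 := ne_of_gt h1s
  set N : ℝ := ((a : ℝ) + d * b) * (1 + s) ^ d + a * t with hN
  have hA : (a : ℝ) + d * b - X - d * Y = N / (((1 + s) ^ d + t) * (1 + s)) := by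
    show (a : ℝ) + d * b - s * N / (((1 + s) ^ d + t) * (1 + s))
        - d * ((b : ℝ) * t / ((1 + s) ^ d + t)) = N / (((1 + s) ^ d + t) * (1 + s))
    field_simp
    ring
  have hB : (a : ℝ) + d * b - d * Y = N / ((1 + s) ^ d + t) := by
    show (a : ℝ) + d * b - d * ((b : ℝ) * t / ((1 + s) ^ d + t)) = N / ((1 + s) ^ d + t)
    field_simp
    ring
  have hC : (b : ℝ) - Y = (b : ℝ) * (1 + s) ^ d / ((1 + s) ^ d + t) := by
    show (b : ℝ) - (b : ℝ) * t / ((1 + s) ^ d + t) = (b : ℝ) * (1 + s) ^ d / ((1 + s) ^ d + t)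
    field_simp
    ring
  constructor
  · rw [hA]
    show s * (N / (((1 + s) ^ d + t) * (1 + s))) = s * N / (((1 + s) ^ d + t) * (1 + s))
    ring
  · rw [hA, hB, hC]
    show t * (N / (((1 + s) ^ d + t) * (1 + s))) ^ d * ((b : ℝ) * (1 + s) ^ d / ((1 + s) ^ d + t))
        = (N / ((1 + s) ^ d + t)) ^ d * ((b : ℝ) * t / ((1 + s) ^ d + t))
    rw [div_pow, div_pow, mul_pow]
    field_simp
end

section
/- Let a, b, d be natural numbers with b ≥ 1, and let s, t be real numbers with 0 < s, 0 < t < b and s + d·t < a + d·b. Set φ₁ = s/(a+db−s−dt) and φ₂ = (a+db−dt)^d·t / ((a+db−s−dt)^d·(b−t)). Then φ₁·((a+db)·(1+φ₁)^d + a·φ₂) / (((1+φ₁)^d + φ₂)·(1+φ₁)) = s and b·φ₂ / ((1+φ₁)^d + φ₂) = t. (This says that the composition of the tautological map with the monomial parametrization sends φ(s,t) back to (s,t), completing the verification that φ is a birational inverse in the proof of Proposition 3.1.) -/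
/-- The composition of the tautological map with the monomial parametrization of the
trapezoid model sends `φ(s,t)` back to `(s,t)` (birational inverse, Proposition 3.1). -/
theorem trapezoid_phi_is_inverse (a b d : ℕ) (hb : 1 ≤ b) (s t : ℝ) (hs : 0 < s)
    (ht : 0 < t) (htb : t < b) (hst : s + d * t < (a : ℝ) + d * b) :
    let φ₁ : ℝ := s / ((a : ℝ) + d * b - s - d * t)
    let φ₂ : ℝ := ((a : ℝ) + d * b - d * t) ^ d * t /
      (((a : ℝ) + d * b - s - d * t) ^ d * ((b : ℝ) - t))
    φ₁ * (((a : ℝ) + d * b) * (1 + φ₁) ^ d + a * φ₂) /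
        (((1 + φ₁) ^ d + φ₂) * (1 + φ₁)) = s ∧
      (b : ℝ) * φ₂ / ((1 + φ₁) ^ d + φ₂) = t := by
  intro φ₁ φ₂
  have hA : 0 < (a:ℝ)+d*b-s-d*t := by linarith
  have hB : 0 < (a:ℝ)+d*b-d*t := by linarith
  have hbt : 0 < (b:ℝ)-t := by linarith
  have hAd : (0:ℝ) < ((a:ℝ)+d*b-s-d*t)^d := pow_pos hA d
  have hBd : (0:ℝ) < ((a:ℝ)+d*b-d*t)^d := pow_pos hB d
  have h1 : 1+φ₁ = ((a:ℝ)+d*b-d*t)/((a:ℝ)+d*b-s-d*t) := by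
    simp only [φ₁]; field_simp; ring
  have h1d : (1+φ₁)^d = ((a:ℝ)+d*b-d*t)^d/((a:ℝ)+d*b-s-d*t)^d := by
    rw [h1, div_pow]
  have h1pos : 0 < 1 + φ₁ := by rw [h1]; positivity
  have hsum : (1+φ₁)^d + φ₂ = ((a:ℝ)+d*b-d*t)^d * b / (((a:ℝ)+d*b-s-d*t)^d * ((b:ℝ)-t)) := by
    rw [h1d]; simp only [φ₂]; field_simp; ring
  constructor
  · rw [hsum, h1d, h1]
    simp only [φ₁, φ₂]
    field_simp
    ring
  · rw [hsum]
    simp only [φ₂]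
    rw [div_eq_iff (div_ne_zero (mul_ne_zero hBd.ne' (show (0:ℝ) < b by linarith).ne') (mul_ne_zero hAd.ne' hbt.ne'))]
    ring
end

section
/- Let a, b, d be natural numbers with b ≥ 1, and let s, t be real numbers with 0 < s, 0 < t < b and s + d·t < a + d·b. Set φ₁ = s/(a+db−s−dt) and φ₂ = (a+db−dt)^d·t / ((a+db−s−dt)^d·(b−t)). Then for every (i,j) ∈ 𝒜 (i.e., 0 ≤ j ≤ b and 0 ≤ i ≤ a+d(b−j)): φ₁^i·φ₂^j / ((1+φ₁)^a·((1+φ₁)^d+φ₂)^b) = s^i·t^j·(a+db−s−dt)^{a+d(b−j)−i}·(b−t)^{b−j} / ((a+db−dt)^{a+d(b−j)}·b^b). (This is the reparametrization identity showing that the rational blending functions β̂ parametrize the same variety as the monomial parametrization, from the proof of Proposition 3.1.) -/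
/-- Reparametrization identity: composing the monomial parametrization with `φ` yields
the rational blending functions of the trapezoid (proof of Proposition 3.1). -/
theorem trapezoid_reparametrization (a b d : ℕ) (hb : 1 ≤ b) (s t : ℝ) (hs : 0 < s)
    (ht : 0 < t) (htb : t < b) (hst : s + d * t < (a : ℝ) + d * b)
    (i j : ℕ) (hj : j ≤ b) (hi : i ≤ a + d * (b - j)) :
    let φ₁ : ℝ := s / ((a : ℝ) + d * b - s - d * t)
    let φ₂ : ℝ := ((a : ℝ) + d * b - d * t) ^ d * t /
      (((a : ℝ) + d * b - s - d * t) ^ d * ((b : ℝ) - t))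
    φ₁ ^ i * φ₂ ^ j / ((1 + φ₁) ^ a * ((1 + φ₁) ^ d + φ₂) ^ b) =
      s ^ i * t ^ j * ((a : ℝ) + d * b - s - d * t) ^ (a + d * (b - j) - i) *
          ((b : ℝ) - t) ^ (b - j) /
        (((a : ℝ) + d * b - d * t) ^ (a + d * (b - j)) * (b : ℝ) ^ b) := by
  intro φ₁ φ₂
  set A : ℝ := (a : ℝ) + d * b - s - d * t with hAdef
  set B : ℝ := (a : ℝ) + d * b - d * t with hBdef
  have hA : 0 < A := by simp only [hAdef]; linarith
  have hB : 0 < B := by simp only [hBdef]; linarith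
  have hbt : 0 < (b : ℝ) - t := by linarith
  have hbp : 0 < (b : ℝ) := by linarith
  have hAne : A ≠ 0 := ne_of_gt hA
  have hBne : B ≠ 0 := ne_of_gt hB
  have hbtne : (b : ℝ) - t ≠ 0 := ne_of_gt hbt
  have h1 : 1 + φ₁ = B / A := by
    show 1 + s / A = B / A
    field_simp
    simp only [hAdef, hBdef]; ring
  have h2 : (1 + φ₁) ^ d + φ₂ = B ^ d * b / (A ^ d * ((b : ℝ) - t)) := by
    rw [h1, div_pow]
    rw [show φ₂ = B ^ d * t / (A ^ d * ((b : ℝ) - t)) from rfl]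
    field_simp
    ring
  have hφ₁ : φ₁ = s / A := rfl
  have hφ₂ : φ₂ = B ^ d * t / (A ^ d * ((b : ℝ) - t)) := rfl
  have esplit : ∀ x : ℝ, x ≠ 0 → x ^ (a + d * (b - j)) = x ^ a * (x ^ b / x ^ j) ^ d := by
    intro x hx
    rw [pow_add, mul_comm d (b - j), pow_mul, pow_sub₀ x hx hj, div_eq_mul_inv]
  rw [h2, h1, hφ₁, hφ₂, pow_sub₀ A hAne hi, esplit A hAne, esplit B hBne,
    pow_sub₀ ((b : ℝ) - t) hbtne hj]
  simp only [div_pow, mul_pow, ← pow_mul]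
  rw [div_eq_div_iff (by positivity) (by positivity)]
  field_simp
  ring
end

section
/- For all natural numbers a', a, b', b, d, l with a' ≤ a and b' ≤ b, and all real numbers s, t, v: Σ_{k=0}^{l} Σ_{j=0}^{B_k} Σ_{i=0}^{M_{j,k}} C(l,k)·C(B_k,j)·C(M_{j,k},i)·s^i·t^j·v^k·h₄^{M_{j,k}−i}·h₅^{B_k−j}·h₆^{l−k}·h₇^{(a+db)l−M_{j,k}}·h₈^{bl−B_k} = h₇^{(a+db)l}·h₈^{bl}·l^l, where h₄ = (a+db)l−s−dt−Cv, h₅ = bl−t−(b−b')v, h₆ = l−v, h₇ = (a+db)l−dt−Cv, h₈ = bl−(b−b')v, C = (a+db)−(a'+db'), B_k = bl−(b−b')k, M_{j,k} = (a+db)l−Ck−dj. (Equivalently, the rational blending functions of the prismatoid, β̂_{(i,j,k)} = w_{i,j,k}·s^i t^j v^k h₄^{M_{j,k}−i} h₅^{B_k−j} h₆^{l−k} / (h₇^{M_{j,k}} h₈^{B_k} l^l), form a partition of unity; this is the partition-of-unity part of Proposition 3.4, establishing that the prismatoid family has rational linear precision.) -/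
/-- Partition-of-unity identity for the rational blending functions of the prismatoid
family (part of Proposition 3.4). -/
theorem prismatoid_partition_of_unity (a' a b' b d l : ℕ) (ha : a' ≤ a) (hb : b' ≤ b)
    (s t v : ℝ) :
    let C : ℕ := (a + d * b) - (a' + d * b')
    let B : ℕ → ℕ := fun k => b * l - (b - b') * k
    let M : ℕ → ℕ → ℕ := fun j k => (a + d * b) * l - C * k - d * j
    let h₄ : ℝ := ((a : ℝ) + d * b) * l - s - d * t - (C : ℝ) * v
    let h₅ : ℝ := (b : ℝ) * l - t - ((b - b' : ℕ) : ℝ) * v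
    let h₆ : ℝ := (l : ℝ) - v
    let h₇ : ℝ := ((a : ℝ) + d * b) * l - d * t - (C : ℝ) * v
    let h₈ : ℝ := (b : ℝ) * l - ((b - b' : ℕ) : ℝ) * v
    (∑ k ∈ Finset.range (l + 1), ∑ j ∈ Finset.range (B k + 1),
        ∑ i ∈ Finset.range (M j k + 1),
          (l.choose k : ℝ) * ((B k).choose j : ℝ) * ((M j k).choose i : ℝ) *
            s ^ i * t ^ j * v ^ k * h₄ ^ (M j k - i) * h₅ ^ (B k - j) * h₆ ^ (l - k) *
            h₇ ^ ((a + d * b) * l - M j k) * h₈ ^ (b * l - B k)) =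
      h₇ ^ ((a + d * b) * l) * h₈ ^ (b * l) * (l : ℝ) ^ l := by
  intro C B M h₄ h₅ h₆ h₇ h₈
  have key : ∀ (x y : ℝ) (n : ℕ),
      ∑ i ∈ Finset.range (n + 1), (n.choose i : ℝ) * x ^ i * y ^ (n - i) = (x + y) ^ n := by
    intro x y n
    rw [add_pow]
    exact Finset.sum_congr rfl fun i _ => by ring
  have hs : s + h₄ = h₇ := by show s + _ = _; ring
  have ht : t + h₅ = h₈ := by show t + _ = _; ring
  have hv : v + h₆ = (l : ℝ) := by show v + _ = _; ring
  have hM : ∀ j k, M j k ≤ (a + d * b) * l := fun j k => by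
    show (a + d * b) * l - C * k - d * j ≤ _; omega
  have hB : ∀ k, B k ≤ b * l := fun k => by
    show b * l - (b - b') * k ≤ _; omega
  have step1 : ∀ k j, (∑ i ∈ Finset.range (M j k + 1),
      (l.choose k : ℝ) * ((B k).choose j : ℝ) * ((M j k).choose i : ℝ) *
        s ^ i * t ^ j * v ^ k * h₄ ^ (M j k - i) * h₅ ^ (B k - j) * h₆ ^ (l - k) *
        h₇ ^ ((a + d * b) * l - M j k) * h₈ ^ (b * l - B k)) =
      (l.choose k : ℝ) * ((B k).choose j : ℝ) * t ^ j * v ^ k * h₅ ^ (B k - j) *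
        h₆ ^ (l - k) * h₇ ^ ((a + d * b) * l) * h₈ ^ (b * l - B k) := by
    intro k j
    have e1 : (∑ i ∈ Finset.range (M j k + 1),
        (l.choose k : ℝ) * ((B k).choose j : ℝ) * ((M j k).choose i : ℝ) *
          s ^ i * t ^ j * v ^ k * h₄ ^ (M j k - i) * h₅ ^ (B k - j) * h₆ ^ (l - k) *
          h₇ ^ ((a + d * b) * l - M j k) * h₈ ^ (b * l - B k)) =
        ((l.choose k : ℝ) * ((B k).choose j : ℝ) * t ^ j * v ^ k * h₅ ^ (B k - j) *
          h₆ ^ (l - k) * h₇ ^ ((a + d * b) * l - M j k) * h₈ ^ (b * l - B k)) *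
          ∑ i ∈ Finset.range (M j k + 1),
            ((M j k).choose i : ℝ) * s ^ i * h₄ ^ (M j k - i) := by
      rw [Finset.mul_sum]
      exact Finset.sum_congr rfl fun i _ => by ring
    rw [e1, key, hs]
    have : h₇ ^ ((a + d * b) * l - M j k) * h₇ ^ (M j k) = h₇ ^ ((a + d * b) * l) := by
      rw [← pow_add]
      congr 1
      exact Nat.sub_add_cancel (hM j k)
    calc _ = (l.choose k : ℝ) * ((B k).choose j : ℝ) * t ^ j * v ^ k * h₅ ^ (B k - j) *
          h₆ ^ (l - k) * (h₇ ^ ((a + d * b) * l - M j k) * h₇ ^ (M j k)) *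
          h₈ ^ (b * l - B k) := by ring
      _ = _ := by rw [this]
  have step2 : ∀ k, (∑ j ∈ Finset.range (B k + 1),
      (l.choose k : ℝ) * ((B k).choose j : ℝ) * t ^ j * v ^ k * h₅ ^ (B k - j) *
        h₆ ^ (l - k) * h₇ ^ ((a + d * b) * l) * h₈ ^ (b * l - B k)) =
      (l.choose k : ℝ) * v ^ k * h₆ ^ (l - k) * h₇ ^ ((a + d * b) * l) * h₈ ^ (b * l) := by
    intro k
    have e1 : (∑ j ∈ Finset.range (B k + 1),
        (l.choose k : ℝ) * ((B k).choose j : ℝ) * t ^ j * v ^ k * h₅ ^ (B k - j) *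
          h₆ ^ (l - k) * h₇ ^ ((a + d * b) * l) * h₈ ^ (b * l - B k)) =
        ((l.choose k : ℝ) * v ^ k * h₆ ^ (l - k) * h₇ ^ ((a + d * b) * l) *
          h₈ ^ (b * l - B k)) *
          ∑ j ∈ Finset.range (B k + 1), ((B k).choose j : ℝ) * t ^ j * h₅ ^ (B k - j) := by
      rw [Finset.mul_sum]
      exact Finset.sum_congr rfl fun j _ => by ring
    rw [e1, key, ht]
    have : h₈ ^ (b * l - B k) * h₈ ^ (B k) = h₈ ^ (b * l) := by
      rw [← pow_add]
      congr 1
      exact Nat.sub_add_cancel (hB k)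
    calc _ = (l.choose k : ℝ) * v ^ k * h₆ ^ (l - k) * h₇ ^ ((a + d * b) * l) *
          (h₈ ^ (b * l - B k) * h₈ ^ (B k)) := by ring
      _ = _ := by rw [this]
  calc (∑ k ∈ Finset.range (l + 1), ∑ j ∈ Finset.range (B k + 1),
        ∑ i ∈ Finset.range (M j k + 1),
          (l.choose k : ℝ) * ((B k).choose j : ℝ) * ((M j k).choose i : ℝ) *
            s ^ i * t ^ j * v ^ k * h₄ ^ (M j k - i) * h₅ ^ (B k - j) * h₆ ^ (l - k) *
            h₇ ^ ((a + d * b) * l - M j k) * h₈ ^ (b * l - B k))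
      = ∑ k ∈ Finset.range (l + 1),
          (l.choose k : ℝ) * v ^ k * h₆ ^ (l - k) * h₇ ^ ((a + d * b) * l) * h₈ ^ (b * l) := by
        refine Finset.sum_congr rfl fun k _ => ?_
        rw [← step2 k]
        exact Finset.sum_congr rfl fun j _ => step1 k j
    _ = (h₇ ^ ((a + d * b) * l) * h₈ ^ (b * l)) *
          ∑ k ∈ Finset.range (l + 1), (l.choose k : ℝ) * v ^ k * h₆ ^ (l - k) := by
        rw [Finset.mul_sum]
        exact Finset.sum_congr rfl fun k _ => by ring
    _ = _ := by rw [key, hv]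
end

section
/- For all natural numbers a', a, b', b, d, l with a' ≤ a and b' ≤ b, the convex hull in ℝ³ of the finite set of points {(i,j,k) : i,j,k ∈ ℕ, 0 ≤ k ≤ l, 0 ≤ j ≤ bl−(b−b')k, 0 ≤ i ≤ (a+db)l−((a+db)−(a'+db'))k−dj} (coerced to ℝ³) is equal to the convex hull of the eight points (0,0,0), ((a+db)l, 0, 0), (al, bl, 0), (0, bl, 0), (0, 0, l), ((a'+db')l, 0, l), (a'l, b'l, l), (0, b'l, l). -/
/-- The convex hull of the lattice points of the prismatoid equals the convex hull of
its eight candidate vertices (Figure 2). -/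
theorem prismatoid_convexHull (a' a b' b d l : ℕ) (ha : a' ≤ a) (hb : b' ≤ b) :
    convexHull ℝ
        {p : ℝ × ℝ × ℝ | ∃ i j k : ℕ, k ≤ l ∧ j ≤ b * l - (b - b') * k ∧
          i ≤ (a + d * b) * l - ((a + d * b) - (a' + d * b')) * k - d * j ∧
          p = ((i : ℝ), (j : ℝ), (k : ℝ))} =
      convexHull ℝ
        ({((0 : ℝ), (0 : ℝ), (0 : ℝ)),
          ((((a : ℝ) + d * b) * l), (0 : ℝ), (0 : ℝ)),
          (((a : ℝ) * l), ((b : ℝ) * l), (0 : ℝ)),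
          ((0 : ℝ), ((b : ℝ) * l), (0 : ℝ)),
          ((0 : ℝ), (0 : ℝ), (l : ℝ)),
          ((((a' : ℝ) + d * b') * l), (0 : ℝ), (l : ℝ)),
          (((a' : ℝ) * l), ((b' : ℝ) * l), (l : ℝ)),
          ((0 : ℝ), ((b' : ℝ) * l), (l : ℝ))} : Set (ℝ × ℝ × ℝ)) := by
  have hdb : d * b' ≤ d * b := Nat.mul_le_mul_left d hb
  have hC : a' + d * b' ≤ a + d * b := Nat.add_le_add ha hdb
  apply Set.Subset.antisymm
  · apply convexHull_min _ (convex_convexHull ℝ _)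
    rintro p ⟨i, j, k, hk, hj, hi, rfl⟩
    -- natural number facts
    have hbb : (b - b') * k ≤ b * l := Nat.mul_le_mul (Nat.sub_le b b') hk
    have hj2 : j + (b - b') * k ≤ b * l := by omega
    -- the deep inequality, via the reals
    have hs : ((a + d * b) - (a' + d * b')) * k + d * j ≤ (a + d * b) * l := by
      have hjR : (j : ℝ) + ((b : ℝ) - b') * k ≤ (b : ℝ) * l := by
        have h := (Nat.cast_le (α := ℝ)).mpr hj2
        push_cast [Nat.cast_sub hb] at h
        linarith
      have hkR : (k : ℝ) ≤ l := by exact_mod_cast hk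
      have haR : (a' : ℝ) ≤ a := by exact_mod_cast ha
      have hdR : (0:ℝ) ≤ d := Nat.cast_nonneg d
      have h1 : (d:ℝ) * ((j:ℝ) + ((b : ℝ) - b') * k) ≤ d * ((b:ℝ) * l) :=
        mul_le_mul_of_nonneg_left hjR hdR
      have h2 : ((a:ℝ) - a') * k ≤ ((a:ℝ) - a') * l :=
        mul_le_mul_of_nonneg_left hkR (by linarith)
      have h3 : (0:ℝ) ≤ (a':ℝ) * l := by positivity
      have hR : (((a + d * b) - (a' + d * b') : ℕ) : ℝ) * k + (d:ℝ) * j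
          ≤ (((a + d * b) : ℕ) : ℝ) * l := by
        rw [Nat.cast_sub hC]
        push_cast
        nlinarith [h1, h2, h3]
      exact_mod_cast hR
    have hi2 : i + (((a + d * b) - (a' + d * b')) * k + d * j) ≤ (a + d * b) * l := by
      set m2 := ((a + d * b) - (a' + d * b')) * k with hm2
      set m3 := d * j with hm3
      set m5 := (a + d * b) * l with hm5
      omega
    -- pass to the reals
    have hjY : (j : ℝ) ≤ (b : ℝ) * l - ((b : ℝ) - b') * k := by
      have h := (Nat.cast_le (α := ℝ)).mpr hj2
      push_cast [Nat.cast_sub hb] at h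
      linarith
    have hiW : (i : ℝ) ≤ ((a:ℝ) + d * b) * l - (((a:ℝ) + d * b) - ((a':ℝ) + d * b')) * k
        - (d:ℝ) * j := by
      have h := (Nat.cast_le (α := ℝ)).mpr hi2
      push_cast [Nat.cast_sub hC] at h
      linarith
    set Y : ℝ := (b : ℝ) * l - ((b : ℝ) - b') * k with hYdef
    set W : ℝ := ((a:ℝ) + d * b) * l - (((a:ℝ) + d * b) - ((a':ℝ) + d * b')) * k
        - (d:ℝ) * j with hWdef
    have hY0 : (0:ℝ) ≤ Y := le_trans (Nat.cast_nonneg j) hjY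
    have hW0 : (0:ℝ) ≤ W := le_trans (Nat.cast_nonneg i) hiW
    set u : ℝ := (k : ℝ) / l with hudef
    set μ : ℝ := (j : ℝ) / Y with hμdef
    set r : ℝ := (i : ℝ) / W with hrdef
    have hu0 : 0 ≤ u := div_nonneg (Nat.cast_nonneg k) (Nat.cast_nonneg l)
    have hu1 : u ≤ 1 := div_le_one_of_le₀ (by exact_mod_cast hk) (Nat.cast_nonneg l)
    have hμ0 : 0 ≤ μ := div_nonneg (Nat.cast_nonneg j) hY0
    have hμ1 : μ ≤ 1 := div_le_one_of_le₀ hjY hY0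
    have hr0 : 0 ≤ r := div_nonneg (Nat.cast_nonneg i) hW0
    have hr1 : r ≤ 1 := div_le_one_of_le₀ hiW hW0
    have hul : u * l = k := by
      rcases eq_or_ne (l:ℝ) 0 with h | h
      · have hl : l = 0 := by exact_mod_cast h
        have hk0 : k = 0 := by omega
        simp [hudef, hk0, h]
      · rw [hudef, div_mul_cancel₀ _ h]
    have hμY : μ * Y = j := by
      rcases eq_or_ne Y 0 with h | h
      · have hj0 : (j:ℝ) = 0 := le_antisymm (h ▸ hjY) (Nat.cast_nonneg j)
        simp [hμdef, hj0, h]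
      · rw [hμdef, div_mul_cancel₀ _ h]
    have hrW : r * W = i := by
      rcases eq_or_ne W 0 with h | h
      · have hi0 : (i:ℝ) = 0 := le_antisymm (h ▸ hiW) (Nat.cast_nonneg i)
        simp [hrdef, hi0, h]
      · rw [hrdef, div_mul_cancel₀ _ h]
    have hcomb : ((i:ℝ), (j:ℝ), (k:ℝ)) =
        (1-u) • ((1-μ) • ((1-r) • ((0:ℝ), (0:ℝ), (0:ℝ))
                          + r • ((((a : ℝ) + d * b) * l), (0:ℝ), (0:ℝ)))
               + μ • ((1-r) • ((0:ℝ), ((b:ℝ) * l), (0:ℝ))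
                    + r • (((a:ℝ) * l), ((b:ℝ) * l), (0:ℝ))))
      + u • ((1-μ) • ((1-r) • ((0:ℝ), (0:ℝ), (l:ℝ))
                          + r • ((((a' : ℝ) + d * b') * l), (0:ℝ), (l:ℝ)))
               + μ • ((1-r) • ((0:ℝ), ((b':ℝ) * l), (l:ℝ))
                    + r • (((a':ℝ) * l), ((b':ℝ) * l), (l:ℝ)))) := by
      simp only [Prod.smul_mk, Prod.mk_add_mk, smul_eq_mul, Prod.mk.injEq]
      refine ⟨?_, ?_, ?_⟩
      · rw [← hrW, hWdef, ← hμY, hYdef, ← hul]; ring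
      · rw [← hμY, hYdef, ← hul]; ring
      · rw [← hul]; ring
    rw [hcomb]
    have hcv := convex_convexHull ℝ
        ({((0 : ℝ), (0 : ℝ), (0 : ℝ)),
          ((((a : ℝ) + d * b) * l), (0 : ℝ), (0 : ℝ)),
          (((a : ℝ) * l), ((b : ℝ) * l), (0 : ℝ)),
          ((0 : ℝ), ((b : ℝ) * l), (0 : ℝ)),
          ((0 : ℝ), (0 : ℝ), (l : ℝ)),
          ((((a' : ℝ) + d * b') * l), (0 : ℝ), (l : ℝ)),
          (((a' : ℝ) * l), ((b' : ℝ) * l), (l : ℝ)),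
          ((0 : ℝ), ((b' : ℝ) * l), (l : ℝ))} : Set (ℝ × ℝ × ℝ))
    have seg : ∀ {x y : ℝ × ℝ × ℝ}, x ∈ convexHull ℝ
        ({((0 : ℝ), (0 : ℝ), (0 : ℝ)),
          ((((a : ℝ) + d * b) * l), (0 : ℝ), (0 : ℝ)),
          (((a : ℝ) * l), ((b : ℝ) * l), (0 : ℝ)),
          ((0 : ℝ), ((b : ℝ) * l), (0 : ℝ)),
          ((0 : ℝ), (0 : ℝ), (l : ℝ)),
          ((((a' : ℝ) + d * b') * l), (0 : ℝ), (l : ℝ)),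
          (((a' : ℝ) * l), ((b' : ℝ) * l), (l : ℝ)),
          ((0 : ℝ), ((b' : ℝ) * l), (l : ℝ))} : Set (ℝ × ℝ × ℝ)) →
        y ∈ convexHull ℝ
        ({((0 : ℝ), (0 : ℝ), (0 : ℝ)),
          ((((a : ℝ) + d * b) * l), (0 : ℝ), (0 : ℝ)),
          (((a : ℝ) * l), ((b : ℝ) * l), (0 : ℝ)),
          ((0 : ℝ), ((b : ℝ) * l), (0 : ℝ)),
          ((0 : ℝ), (0 : ℝ), (l : ℝ)),
          ((((a' : ℝ) + d * b') * l), (0 : ℝ), (l : ℝ)),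
          (((a' : ℝ) * l), ((b' : ℝ) * l), (l : ℝ)),
          ((0 : ℝ), ((b' : ℝ) * l), (l : ℝ))} : Set (ℝ × ℝ × ℝ)) →
        ∀ {c : ℝ}, 0 ≤ c → c ≤ 1 → (1-c) • x + c • y ∈ convexHull ℝ
        ({((0 : ℝ), (0 : ℝ), (0 : ℝ)),
          ((((a : ℝ) + d * b) * l), (0 : ℝ), (0 : ℝ)),
          (((a : ℝ) * l), ((b : ℝ) * l), (0 : ℝ)),
          ((0 : ℝ), ((b : ℝ) * l), (0 : ℝ)),
          ((0 : ℝ), (0 : ℝ), (l : ℝ)),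
          ((((a' : ℝ) + d * b') * l), (0 : ℝ), (l : ℝ)),
          (((a' : ℝ) * l), ((b' : ℝ) * l), (l : ℝ)),
          ((0 : ℝ), ((b' : ℝ) * l), (l : ℝ))} : Set (ℝ × ℝ × ℝ)) := by
      intro x y hx hy c h0 h1
      exact hcv.segment_subset hx hy ⟨1-c, c, by linarith, h0, by ring, rfl⟩
    have mem : ∀ q ∈ ({((0 : ℝ), (0 : ℝ), (0 : ℝ)),
          ((((a : ℝ) + d * b) * l), (0 : ℝ), (0 : ℝ)),
          (((a : ℝ) * l), ((b : ℝ) * l), (0 : ℝ)),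
          ((0 : ℝ), ((b : ℝ) * l), (0 : ℝ)),
          ((0 : ℝ), (0 : ℝ), (l : ℝ)),
          ((((a' : ℝ) + d * b') * l), (0 : ℝ), (l : ℝ)),
          (((a' : ℝ) * l), ((b' : ℝ) * l), (l : ℝ)),
          ((0 : ℝ), ((b' : ℝ) * l), (l : ℝ))} : Set (ℝ × ℝ × ℝ)), q ∈ convexHull ℝ
        ({((0 : ℝ), (0 : ℝ), (0 : ℝ)),
          ((((a : ℝ) + d * b) * l), (0 : ℝ), (0 : ℝ)),
          (((a : ℝ) * l), ((b : ℝ) * l), (0 : ℝ)),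
          ((0 : ℝ), ((b : ℝ) * l), (0 : ℝ)),
          ((0 : ℝ), (0 : ℝ), (l : ℝ)),
          ((((a' : ℝ) + d * b') * l), (0 : ℝ), (l : ℝ)),
          (((a' : ℝ) * l), ((b' : ℝ) * l), (l : ℝ)),
          ((0 : ℝ), ((b' : ℝ) * l), (l : ℝ))} : Set (ℝ × ℝ × ℝ)) :=
      fun q hq => subset_convexHull ℝ _ hq
    refine seg (seg (seg (mem _ ?_) (mem _ ?_) hr0 hr1)
                    (seg (mem _ ?_) (mem _ ?_) hr0 hr1) hμ0 hμ1)
               (seg (seg (mem _ ?_) (mem _ ?_) hr0 hr1)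
                    (seg (mem _ ?_) (mem _ ?_) hr0 hr1) hμ0 hμ1) hu0 hu1
    · exact Or.inl rfl
    · exact Or.inr (Or.inl rfl)
    · exact Or.inr (Or.inr (Or.inr (Or.inl rfl)))
    · exact Or.inr (Or.inr (Or.inl rfl))
    · exact Or.inr (Or.inr (Or.inr (Or.inr (Or.inl rfl))))
    · exact Or.inr (Or.inr (Or.inr (Or.inr (Or.inr (Or.inl rfl)))))
    · exact Or.inr (Or.inr (Or.inr (Or.inr (Or.inr (Or.inr (Or.inr rfl))))))
    · exact Or.inr (Or.inr (Or.inr (Or.inr (Or.inr (Or.inr (Or.inl rfl))))))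
  · apply convexHull_mono
    intro p hp
    simp only [Set.mem_insert_iff, Set.mem_singleton_iff] at hp
    rcases hp with rfl | rfl | rfl | rfl | rfl | rfl | rfl | rfl
    · exact ⟨0, 0, 0, by simp, by simp, by simp, by simp⟩
    · exact ⟨(a + d * b) * l, 0, 0, by simp, by simp, by simp, by push_cast; ring_nf⟩
    · refine ⟨a * l, b * l, 0, by simp, by simp, ?_, by push_cast; ring_nf⟩
      simp only [Nat.mul_zero, Nat.sub_zero]
      rw [add_mul, ← mul_assoc, Nat.add_sub_cancel]
    · exact ⟨0, b * l, 0, by simp, by simp, by simp, by push_cast; ring_nf⟩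
    · exact ⟨0, 0, l, le_refl l, by simp, by simp, by push_cast; ring_nf⟩
    · refine ⟨(a' + d * b') * l, 0, l, le_refl l, by simp, ?_, by push_cast; ring_nf⟩
      rw [Nat.sub_mul]
      have h1 : (a' + d * b') * l ≤ (a + d * b) * l := Nat.mul_le_mul_right l hC
      set x1 := (a' + d * b') * l
      set x2 := (a + d * b) * l
      omega
    · refine ⟨a' * l, b' * l, l, le_refl l, ?_, ?_, by push_cast; ring_nf⟩
      · rw [Nat.sub_mul]
        have h1 : b' * l ≤ b * l := Nat.mul_le_mul_right l hb
        set x1 := b' * l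
        set x2 := b * l
        omega
      · rw [Nat.sub_mul, add_mul, add_mul, ← mul_assoc]
        have h1 : a' * l ≤ a * l := Nat.mul_le_mul_right l ha
        have h2 : d * b' * l ≤ d * b * l := Nat.mul_le_mul_right l hdb
        set x1 := a' * l
        set x2 := a * l
        set x3 := d * b' * l
        set x4 := d * b * l
        omega
    · refine ⟨0, b' * l, l, le_refl l, ?_, by simp, by push_cast; ring_nf⟩
      rw [Nat.sub_mul]
      have h1 : b' * l ≤ b * l := Nat.mul_le_mul_right l hb
      set x1 := b' * l
      set x2 := b * l
      omega
end

section
/- Let ι be a finite type, R a commutative ring, θ : ι → R, a ≥ 1 and b ≥ 1 natural numbers, and q ∈ ι. Then b · (Σ_{K' : ΣK'=b} C(b; K')·θ^{K'}) · (Σ_{K : ΣK=a} K(q)·C(a; K)·θ^{K}) = a · (Σ_{K : ΣK=a} C(a; K)·θ^{K}) · (Σ_{K' : ΣK'=b} K'(q)·C(b; K')·θ^{K'}). (This is the relation of Lemma B.1(4), which asserts that any two vertices of a multinomial staged tree in the same stage give the same estimate of the stage parameter θ_q; it underlies the generators of the ideal I_stages.) -/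
open Finset

private lemma sum_update_univ {ι : Type*} [Fintype ι] [DecidableEq ι]
    (K : ι → ℕ) (q : ι) (v : ℕ) :
    Finset.univ.sum (Function.update K q v) = v + ∑ i ∈ Finset.univ.erase q, K i := by
  rw [← Finset.add_sum_erase _ _ (Finset.mem_univ q), Function.update_self]
  congr 1
  exact Finset.sum_congr rfl fun i hi => Function.update_of_ne (Finset.mem_erase.1 hi).1 _ _

private lemma succ_mul_multinomial_update {ι : Type*} [Fintype ι] [DecidableEq ι]
    (K : ι → ℕ) (q : ι) :
    (K q + 1) * Nat.multinomial Finset.univ (Function.update K q (K q + 1)) =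
      ((∑ i, K i) + 1) * Nat.multinomial Finset.univ K := by
  have h1 := Nat.multinomial_spec (Finset.univ : Finset ι) K
  have h2 := Nat.multinomial_spec (Finset.univ : Finset ι) (Function.update K q (K q + 1))
  have hs : ∑ i, Function.update K q (K q + 1) i = (∑ i, K i) + 1 := by
    have := sum_update_univ K q (K q + 1)
    have h3 := Finset.add_sum_erase Finset.univ K (Finset.mem_univ q)
    have hb2 : Finset.univ.sum (Function.update K q (K q + 1)) =
        ∑ i, Function.update K q (K q + 1) i := rfl
    have hb3 : Finset.univ.sum K = ∑ i, K i := rfl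
    omega
  have herase : ∏ i ∈ Finset.univ.erase q, Nat.factorial (Function.update K q (K q + 1) i) =
      ∏ i ∈ Finset.univ.erase q, Nat.factorial (K i) :=
    Finset.prod_congr rfl fun i hi => by rw [Function.update_of_ne (Finset.mem_erase.1 hi).1]
  have hp : ∏ i, Nat.factorial (Function.update K q (K q + 1) i) =
      (K q + 1) * ∏ i, Nat.factorial (K i) := by
    rw [← Finset.mul_prod_erase _ (fun i => Nat.factorial (Function.update K q (K q + 1) i))
      (Finset.mem_univ q), ← Finset.mul_prod_erase _ (fun i => Nat.factorial (K i))
      (Finset.mem_univ q), herase, Function.update_self, Nat.factorial_succ]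
    ring
  rw [hs] at h2
  have hpos : 0 < ∏ i, Nat.factorial (K i) := Finset.prod_pos fun i _ => Nat.factorial_pos _
  have key : (∏ i, Nat.factorial (K i)) * ((K q + 1) *
      Nat.multinomial Finset.univ (Function.update K q (K q + 1))) =
      (∏ i, Nat.factorial (K i)) * (((∑ i, K i) + 1) * Nat.multinomial Finset.univ K) := by
    calc (∏ i, Nat.factorial (K i)) * ((K q + 1) *
        Nat.multinomial Finset.univ (Function.update K q (K q + 1)))
        = ((K q + 1) * ∏ i, Nat.factorial (K i)) *
          Nat.multinomial Finset.univ (Function.update K q (K q + 1)) := by ring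
      _ = (∏ i, Nat.factorial (Function.update K q (K q + 1) i)) *
          Nat.multinomial Finset.univ (Function.update K q (K q + 1)) := by rw [hp]
      _ = Nat.factorial ((∑ i, K i) + 1) := h2
      _ = ((∑ i, K i) + 1) * Nat.factorial (∑ i, K i) := Nat.factorial_succ _
      _ = (∏ i, Nat.factorial (K i)) * (((∑ i, K i) + 1) * Nat.multinomial Finset.univ K) := by
          rw [← h1]; ring
  exact Nat.eq_of_mul_eq_mul_left hpos key

private lemma aux_deriv_sum {ι : Type*} [Fintype ι] [DecidableEq ι]
    {R : Type*} [CommRing R] (θ : ι → R) (a : ℕ) (q : ι) :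
    (∑ K ∈ Finset.piAntidiag Finset.univ (a + 1),
        (K q : R) * (Nat.multinomial Finset.univ K : R) * ∏ i, θ i ^ K i) =
      (a + 1 : ℕ) * θ q * (∑ i, θ i) ^ a := by
  rw [Finset.sum_pow_eq_sum_piAntidiag, Finset.mul_sum]
  rw [← Finset.sum_filter_of_ne (p := fun K => K q ≠ 0)
    (fun K _ h => by intro h0; simp [h0] at h)]
  refine Finset.sum_nbij' (fun K => Function.update K q (K q - 1))
    (fun K => Function.update K q (K q + 1)) ?_ ?_ ?_ ?_ ?_
  · intro K hK
    simp only [Finset.mem_filter, Finset.mem_piAntidiag] at hK ⊢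
    obtain ⟨⟨hsum, -⟩, hq⟩ := hK
    refine ⟨?_, fun i _ => Finset.mem_univ i⟩
    have h1 := sum_update_univ K q (K q - 1)
    have h2 := Finset.add_sum_erase Finset.univ K (Finset.mem_univ q)
    have hb1 : Finset.univ.sum (Function.update K q (K q - 1)) =
        ∑ i, Function.update K q (K q - 1) i := rfl
    have hb2 : Finset.univ.sum (Function.update K q (K q + 1)) =
        ∑ i, Function.update K q (K q + 1) i := rfl
    have hb3 : Finset.univ.sum K = ∑ i, K i := rfl
    omega
  · intro K hK
    simp only [Finset.mem_filter, Finset.mem_piAntidiag] at hK ⊢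
    obtain ⟨hsum, -⟩ := hK
    refine ⟨⟨?_, fun i _ => Finset.mem_univ i⟩, by simp⟩
    have h1 := sum_update_univ K q (K q + 1)
    have h2 := Finset.add_sum_erase Finset.univ K (Finset.mem_univ q)
    have hb1 : Finset.univ.sum (Function.update K q (K q - 1)) =
        ∑ i, Function.update K q (K q - 1) i := rfl
    have hb2 : Finset.univ.sum (Function.update K q (K q + 1)) =
        ∑ i, Function.update K q (K q + 1) i := rfl
    have hb3 : Finset.univ.sum K = ∑ i, K i := rfl
    omega
  · intro K hK
    simp only [Finset.mem_filter] at hK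
    funext i
    rcases eq_or_ne i q with rfl | h
    · have := hK.2
      simp only [Function.update_self]
      omega
    · simp [Function.update_of_ne h]
  · intro K hK
    funext i
    rcases eq_or_ne i q with rfl | h
    · simp
    · simp [Function.update_of_ne h]
  · intro K hK
    simp only [Finset.mem_filter, Finset.mem_piAntidiag] at hK
    obtain ⟨⟨hsum, -⟩, hq⟩ := hK
    obtain ⟨m, hKq⟩ : ∃ m, K q = m + 1 := ⟨K q - 1, by omega⟩
    set L : ι → ℕ := Function.update K q (K q - 1) with hL
    have hLq : L q = m := by simp [hL, hKq]
    have hLK : K = Function.update L q (m + 1) := by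
      funext i; rcases eq_or_ne i q with rfl | h
      · simp [hLq, hKq]
      · simp [hL, Function.update_of_ne h]
    have hLsum : ∑ i, L i = a := by
      have h1 := sum_update_univ K q (K q - 1)
      have h2 := Finset.add_sum_erase Finset.univ K (Finset.mem_univ q)
      have hb1 : (∑ i, L i) = Finset.univ.sum (Function.update K q (K q - 1)) := rfl
      have hb3 : Finset.univ.sum K = ∑ i, K i := rfl
      omega
    have key := succ_mul_multinomial_update L q
    rw [hLsum, hLq] at key
    have herase : ∏ i ∈ Finset.univ.erase q, θ i ^ K i =
        ∏ i ∈ Finset.univ.erase q, θ i ^ L i :=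
      Finset.prod_congr rfl fun i hi => by
        rw [hL, Function.update_of_ne (Finset.mem_erase.1 hi).1]
    have hprod : (∏ i, θ i ^ K i) = θ q * ∏ i, θ i ^ L i := by
      rw [← Finset.mul_prod_erase _ (fun i => θ i ^ K i) (Finset.mem_univ q),
        ← Finset.mul_prod_erase _ (fun i => θ i ^ L i) (Finset.mem_univ q),
        herase, hKq, hLq, pow_succ]
      ring
    have hcast : ((K q : ℕ) : R) * (Nat.multinomial Finset.univ K : R) =
        ((a + 1 : ℕ) : R) * (Nat.multinomial Finset.univ L : R) := by
      rw [hKq]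
      conv_lhs => rw [hLK]
      exact_mod_cast congrArg (Nat.cast (R := R)) key
    calc (K q : R) * (Nat.multinomial Finset.univ K : R) * ∏ i, θ i ^ K i
        = ((a + 1 : ℕ) : R) * (Nat.multinomial Finset.univ L : R) * (θ q * ∏ i, θ i ^ L i) := by
          rw [hcast, hprod]
      _ = ((a + 1 : ℕ) : R) * θ q *
          ((Nat.multinomial Finset.univ L : R) * ∏ i, θ i ^ L i) := by ring

/-- Relation of Lemma B.1(4): two vertices in the same stage give the same estimate of
the stage parameter `θ_q` (generators of the ideal `I_stages`). -/
theorem stages_relation {ι : Type*} [Fintype ι] [DecidableEq ι]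
    {R : Type*} [CommRing R] (θ : ι → R) (a b : ℕ) (ha : 1 ≤ a) (hb : 1 ≤ b) (q : ι) :
    (b : R) *
        (∑ K' ∈ Finset.piAntidiag Finset.univ b,
          (Nat.multinomial Finset.univ K' : R) * ∏ i, θ i ^ K' i) *
        (∑ K ∈ Finset.piAntidiag Finset.univ a,
          (K q : R) * (Nat.multinomial Finset.univ K : R) * ∏ i, θ i ^ K i) =
      (a : R) *
        (∑ K ∈ Finset.piAntidiag Finset.univ a,
          (Nat.multinomial Finset.univ K : R) * ∏ i, θ i ^ K i) *
        (∑ K' ∈ Finset.piAntidiag Finset.univ b,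
          (K' q : R) * (Nat.multinomial Finset.univ K' : R) * ∏ i, θ i ^ K' i) := by
  obtain ⟨a, rfl⟩ := Nat.exists_eq_add_of_le ha
  obtain ⟨b, rfl⟩ := Nat.exists_eq_add_of_le hb
  rw [add_comm 1 a, add_comm 1 b, aux_deriv_sum, aux_deriv_sum,
    ← Finset.sum_pow_eq_sum_piAntidiag, ← Finset.sum_pow_eq_sum_piAntidiag]
  push_cast
  ring
end

section
/- With the data of a multinomial staged tree model parametrization: for every θ : I → ℝ with θ(i) > 0 for all i and Σ_{i : ℬ(i)=ℓ} θ(i) = 1 for every block ℓ, one has Π_{j∈J} (c(j) · Π_{i∈I} θ(i)^{a(i,j)})^{u(j)} ≤ Π_{j∈J} (c(j) · Π_{i∈I} θ̂(i)^{a(i,j)})^{u(j)}. That is, the likelihood of the vector of counts u is maximized over the parameter space at θ̂, whose coordinates are the rational functions θ̂(i) = (Σ_j u(j)·a(i,j)) / (Σ_{i' : ℬ(i')=ℬ(i)} Σ_j u(j)·a(i',j)) of u; hence the multinomial staged tree model has rational maximum likelihood estimator (Theorem 4.21). -/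
open Finset

lemma block_ineq {I : Type*} (s : Finset I) (N : I → ℕ) (θ : I → ℝ)
    (hθ : ∀ i ∈ s, 0 < θ i) (D : ℕ) (hD : 0 < D)
    (hDsum : ∑ i ∈ s, N i = D) (hsum : ∑ i ∈ s, θ i = 1) :
    ∏ i ∈ s, θ i ^ N i ≤ ∏ i ∈ s, ((N i : ℝ) / (D : ℝ)) ^ N i := by
  have hD' : (0:ℝ) < D := by exact_mod_cast hD
  set w : I → ℝ := fun i => (N i : ℝ) / D with hw
  have hwnn : ∀ i, 0 ≤ w i := fun i => by positivity
  have hwsum : ∑ i ∈ s, w i = 1 := by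
    rw [hw, ← Finset.sum_div,
      show ∑ i ∈ s, ((N i : ℝ)) = (D:ℝ) by exact_mod_cast congrArg Nat.cast hDsum]
    exact div_self hD'.ne'
  set z : I → ℝ := fun i => if N i = 0 then 0 else θ i / w i with hz
  have hznn : ∀ i ∈ s, 0 ≤ z i := by
    intro i hi; rw [hz]; dsimp only
    split
    · exact le_refl _
    · exact div_nonneg (hθ i hi).le (hwnn i)
  have hwpos : ∀ i, N i ≠ 0 → 0 < w i := by
    intro i hNi
    rw [hw]
    have : (0:ℝ) < N i := by exact_mod_cast Nat.pos_of_ne_zero hNi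
    positivity
  have key := Real.geom_mean_le_arith_mean_weighted s w z (fun i _ => hwnn i) hwsum hznn
  -- the arithmetic mean is at most 1
  have hA : ∑ i ∈ s, w i * z i ≤ 1 := by
    rw [← hsum]
    refine Finset.sum_le_sum fun i hi => ?_
    rw [hz]; dsimp only
    split
    · simpa using (hθ i hi).le
    · rename_i h
      rw [mul_comm, div_mul_cancel₀ _ (hwpos i h).ne']
  -- rewrite the geometric mean
  have hzw : ∀ i ∈ s, z i ^ w i = θ i ^ w i / w i ^ w i := by
    intro i hi
    rw [hz, hw]; dsimp only
    by_cases h : N i = 0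
    · simp [h]
    · rw [if_neg h, Real.div_rpow (hθ i hi).le (hwnn i)]
  have hwwpos : 0 < ∏ i ∈ s, w i ^ w i := by
    refine Finset.prod_pos fun i hi => ?_
    by_cases h : N i = 0
    · have : w i = 0 := by rw [hw]; simp [h]
      rw [this, Real.rpow_zero]; norm_num
    · exact Real.rpow_pos_of_pos (hwpos i h) _
  have hB : ∏ i ∈ s, θ i ^ w i ≤ ∏ i ∈ s, w i ^ w i := by
    rw [← div_le_one hwwpos, ← Finset.prod_div_distrib]
    calc ∏ i ∈ s, θ i ^ w i / w i ^ w i = ∏ i ∈ s, z i ^ w i :=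
          (Finset.prod_congr rfl hzw).symm
      _ ≤ ∑ i ∈ s, w i * z i := key
      _ ≤ 1 := hA
  have hpow : ∀ (x : ℝ) (i : I), 0 ≤ x → (x ^ w i) ^ D = x ^ N i := by
    intro x i hx
    rw [← Real.rpow_natCast (x ^ w i) D, ← Real.rpow_mul hx, hw]
    dsimp only
    rw [div_mul_cancel₀ _ hD'.ne', Real.rpow_natCast]
  calc ∏ i ∈ s, θ i ^ N i = (∏ i ∈ s, θ i ^ w i) ^ D := by
        rw [← Finset.prod_pow]
        exact Finset.prod_congr rfl fun i hi => (hpow (θ i) i (hθ i hi).le).symm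
    _ ≤ (∏ i ∈ s, w i ^ w i) ^ D :=
        pow_le_pow_left₀
          (Finset.prod_nonneg fun i hi => Real.rpow_nonneg (hθ i hi).le _) hB D
    _ = ∏ i ∈ s, ((N i : ℝ) / (D:ℝ)) ^ N i := by
        rw [← Finset.prod_pow]
        exact Finset.prod_congr rfl fun i _ => hpow (w i) i (hwnn i)

/-- Theorem 4.21: the multinomial staged tree model has rational maximum likelihood
estimator. The likelihood of the counts `u` is maximized over the parameter space at
`θ̂(i) = N(i)/D(ℬ(i))`. -/
theorem multinomialStagedTree_rational_MLE {J I : Type*} [Fintype J] [Fintype I]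
    {m : ℕ} (ℬ : I → Fin m) (a : I → J → ℕ) (c : J → ℝ) (hc : ∀ j, 0 < c j)
    (u : J → ℕ)
    (N : I → ℕ) (hN : ∀ i, N i = ∑ j, u j * a i j)
    (D : Fin m → ℕ) (hDdef : ∀ ℓ, D ℓ = ∑ i ∈ Finset.univ.filter (fun i => ℬ i = ℓ), N i)
    (hD : ∀ ℓ, 0 < D ℓ)
    (θhat : I → ℝ) (hθhat : ∀ i, θhat i = (N i : ℝ) / (D (ℬ i) : ℝ))
    (θ : I → ℝ) (hθpos : ∀ i, 0 < θ i)
    (hθsum : ∀ ℓ : Fin m, ∑ i ∈ Finset.univ.filter (fun i => ℬ i = ℓ), θ i = 1) :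
    ∏ j, (c j * ∏ i, θ i ^ a i j) ^ u j ≤
      ∏ j, (c j * ∏ i, θhat i ^ a i j) ^ u j := by
  have key : ∀ φ : I → ℝ, ∏ j, (c j * ∏ i, φ i ^ a i j) ^ u j
      = (∏ j, c j ^ u j) * ∏ i, φ i ^ N i := by
    intro φ
    simp_rw [mul_pow]
    rw [Finset.prod_mul_distrib]
    congr 1
    calc ∏ j, (∏ i, φ i ^ a i j) ^ u j
        = ∏ j, ∏ i, φ i ^ (u j * a i j) := by
          refine Finset.prod_congr rfl fun j _ => ?_
          rw [← Finset.prod_pow]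
          exact Finset.prod_congr rfl fun i _ => by rw [← pow_mul, mul_comm]
      _ = ∏ i, ∏ j, φ i ^ (u j * a i j) := Finset.prod_comm
      _ = ∏ i, φ i ^ N i := Finset.prod_congr rfl fun i _ => by
          rw [Finset.prod_pow_eq_pow_sum, hN]
  rw [key θ, key θhat]
  refine mul_le_mul_of_nonneg_left ?_
    (Finset.prod_nonneg fun j _ => pow_nonneg (hc j).le _)
  rw [← Finset.prod_fiberwise Finset.univ ℬ (fun i => θ i ^ N i),
    ← Finset.prod_fiberwise Finset.univ ℬ (fun i => θhat i ^ N i)]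
  refine Finset.prod_le_prod
    (fun ℓ _ => Finset.prod_nonneg fun i _ => pow_nonneg (hθpos i).le _) (fun ℓ _ => ?_)
  refine le_trans (block_ineq _ N θ (fun i _ => hθpos i) (D ℓ) (hD ℓ) (hDdef ℓ).symm
    (hθsum ℓ)) (le_of_eq (Finset.prod_congr rfl fun i hi => ?_))
  rw [hθhat, (Finset.mem_filter.mp hi).2]
end

section
/- With the data of a multinomial staged tree model parametrization, and assuming u(j) > 0 for all j ∈ J: for every j ∈ J, (−1)^{Σ_{i∈I} a(i,j)} · c(j) · (Π_{i∈I} (N(i) : ℝ)^{a(i,j)}) · Π_{ℓ=0}^{m−1} (−(D(ℓ) : ℝ))^{−(Σ_{i : ℬ(i)=ℓ} a(i,j)) : ℤ} = c(j) · Π_{i∈I} θ̂(i)^{a(i,j)}, where the powers with negative integer exponents are real integer powers (zpow). (This is the computation of Corollary 4.22: the Horn parametrization determined by the matrix with rows a(i,·) for i ∈ I and negative rows −Σ_{i : ℬ(i)=ℓ} a(i,·) for each block ℓ, with coefficients λ(j) = (−1)^{Σ_i a(i,j)}·c(j), agrees with the rational maximum likelihood estimator of the multinomial staged tree model; hence (H,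 λ) is a Horn pair for the model.) -/
/-- Corollary 4.22: the Horn parametrization determined by the matrix with positive rows
`a(i,·)` and negative rows `−Σ_{ℬ(i)=ℓ} a(i,·)`, with coefficients
`λ(j) = (−1)^{Σ_i a(i,j)}·c(j)`, agrees with the rational MLE of the multinomial staged
tree model; hence `(H,λ)` is a Horn pair for the model. -/
theorem multinomialStagedTree_horn_pair {J I : Type*} [Fintype J] [Fintype I]
    {m : ℕ} (ℬ : I → Fin m) (a : I → J → ℕ) (c : J → ℝ) (hc : ∀ j, 0 < c j)
    (u : J → ℕ) (hu : ∀ j, 0 < u j)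
    (N : I → ℕ) (hN : ∀ i, N i = ∑ j, u j * a i j)
    (D : Fin m → ℕ) (hDdef : ∀ ℓ, D ℓ = ∑ i ∈ Finset.univ.filter (fun i => ℬ i = ℓ), N i)
    (hD : ∀ ℓ, 0 < D ℓ)
    (θhat : I → ℝ) (hθhat : ∀ i, θhat i = (N i : ℝ) / (D (ℬ i) : ℝ))
    (j : J) :
    (-1 : ℝ) ^ (∑ i, a i j) * c j * (∏ i, (N i : ℝ) ^ a i j) *
        (∏ ℓ : Fin m,
          (-(D ℓ : ℝ)) ^ (-((∑ i ∈ Finset.univ.filter (fun i => ℬ i = ℓ), a i j : ℕ) : ℤ))) =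
      c j * ∏ i, θhat i ^ a i j := by
  set k : Fin m → ℕ := fun ℓ => ∑ i ∈ Finset.univ.filter (fun i => ℬ i = ℓ), a i j with hk
  have hsum : ∑ ℓ, k ℓ = ∑ i, a i j := Finset.sum_fiberwise _ _ _
  have hDne : ∀ ℓ, (D ℓ : ℝ) ≠ 0 := fun ℓ => by exact_mod_cast (hD ℓ).ne'
  have hfac : ∀ ℓ : Fin m,
      (-(D ℓ : ℝ)) ^ (-(k ℓ : ℤ)) = (-1 : ℝ) ^ k ℓ * ((D ℓ : ℝ) ^ k ℓ)⁻¹ := by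
    intro ℓ
    rw [zpow_neg, zpow_natCast, neg_pow, mul_inv, ← inv_pow, inv_neg, inv_one]
  rw [Finset.prod_congr rfl fun ℓ _ => hfac ℓ, Finset.prod_mul_distrib,
    Finset.prod_pow_eq_pow_sum, hsum]
  have hθ : ∏ i, θhat i ^ a i j
      = (∏ i, (N i : ℝ) ^ a i j) * (∏ i, ((D (ℬ i) : ℝ) ^ a i j)⁻¹) := by
    rw [← Finset.prod_mul_distrib]
    refine Finset.prod_congr rfl fun i _ => ?_
    rw [hθhat i, div_pow, div_eq_mul_inv]
  have hfib : ∏ i, ((D (ℬ i) : ℝ) ^ a i j)⁻¹ = ∏ ℓ, ((D ℓ : ℝ) ^ k ℓ)⁻¹ := by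
    rw [← Finset.prod_fiberwise Finset.univ ℬ (fun i => ((D (ℬ i) : ℝ) ^ a i j)⁻¹)]
    refine Finset.prod_congr rfl fun ℓ _ => ?_
    rw [Finset.prod_inv_distrib, ← Finset.prod_pow_eq_pow_sum]
    exact congrArg Inv.inv (Finset.prod_congr rfl fun i hi => by
      rw [(Finset.mem_filter.1 hi).2])
  rw [hθ, hfib]
  ring_nf
  rw [pow_mul', neg_one_sq, one_pow, mul_one]
end

section
/- Under the Veronese-type relations, for every natural number k₀ with k₀ < a one has (a − k₀) · P(k₀) · l₁ = (k₀ + 1) · P(k₀+1) · l₂. (Lemma B.3, the auxiliary lemma used to prove the localization identities for binary multinomial staged trees.) -/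
/-- In a `ℚ`-algebra, nonzero natural numbers can be cancelled. -/
lemma nat_cancel_qalg {R : Type*} [CommRing R] [Algebra ℚ R] (n : ℕ) (hn : n ≠ 0)
    {x y : R} (h : (n : R) * x = (n : R) * y) : x = y := by
  have h' : (n : ℚ) • x = (n : ℚ) • y := by
    rw [Algebra.smul_def, Algebra.smul_def, map_natCast]; exact h
  have hq : (n : ℚ) ≠ 0 := Nat.cast_ne_zero.mpr hn
  calc x = ((n : ℚ)⁻¹) • ((n : ℚ) • x) := by
        rw [smul_smul, inv_mul_cancel₀ hq, one_smul]
    _ = ((n : ℚ)⁻¹) • ((n : ℚ) • y) := by rw [h']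
    _ = y := by rw [smul_smul, inv_mul_cancel₀ hq, one_smul]

/-- Lemma B.3: under the Veronese-type relations of a binary multinomial staged tree,
`(a−k₀)·P(k₀)·l₁ = (k₀+1)·P(k₀+1)·l₂`. -/
theorem binary_tree_auxiliary_lemma {R : Type*} [CommRing R] [Algebra ℚ R]
    (a : ℕ) (ha : 1 ≤ a) (P : ℕ → R)
    (hV : ∀ k₀ k : ℕ, k₀ < a → 1 ≤ k → k ≤ a →
      ((a.choose (k₀ + 1) * a.choose (k - 1) : ℕ) : R) * (P k₀ * P k) =
        ((a.choose k₀ * a.choose k : ℕ) : R) * (P (k₀ + 1) * P (k - 1)))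
    (k₀ : ℕ) (hk₀ : k₀ < a) :
    ((a - k₀ : ℕ) : R) * P k₀ * (∑ k ∈ Finset.Icc 1 a, (k : R) * P k) =
      ((k₀ + 1 : ℕ) : R) * P (k₀ + 1) * (∑ k ∈ Finset.Icc 1 a, (k : R) * P (a - k)) := by
  -- Reindex the second sum by `k ↦ a + 1 - k`.
  have hre : (∑ k ∈ Finset.Icc 1 a, (k : R) * P (a - k)) =
      ∑ k ∈ Finset.Icc 1 a, ((a + 1 - k : ℕ) : R) * P (k - 1) := by
    apply Finset.sum_nbij' (fun k => a + 1 - k) (fun k => a + 1 - k)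
    · intro x hx; simp only [Finset.mem_Icc] at hx ⊢; omega
    · intro x hx; simp only [Finset.mem_Icc] at hx ⊢; omega
    · intro x hx; simp only [Finset.mem_Icc] at hx; omega
    · intro x hx; simp only [Finset.mem_Icc] at hx; omega
    · intro x hx
      simp only [Finset.mem_Icc] at hx
      have h1 : a + 1 - (a + 1 - x) = x := by omega
      have h2 : a - x = (a + 1 - x) - 1 := by omega
      rw [h1, h2]
  rw [hre, Finset.mul_sum, Finset.mul_sum]
  apply Finset.sum_congr rfl
  intro k hk
  simp only [Finset.mem_Icc] at hk
  obtain ⟨hk1, hka⟩ := hk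
  -- Termwise identity, proven by cancelling `C(a,k₀) * C(a,k-1)`.
  apply nat_cancel_qalg (a.choose k₀ * a.choose (k - 1))
  · exact Nat.mul_ne_zero (Nat.choose_pos (le_of_lt hk₀)).ne'
      (Nat.choose_pos (by omega : k - 1 ≤ a)).ne'
  have h := hV k₀ k hk₀ hk1 hka
  -- Binomial identities (cast to `R`).
  have e1 : ((a.choose (k₀ + 1) * (k₀ + 1) : ℕ) : R) = ((a.choose k₀ * (a - k₀) : ℕ) : R) := by
    exact_mod_cast congrArg (Nat.cast : ℕ → R) (Nat.choose_succ_right_eq a k₀)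
  have e2 : ((a.choose k * k : ℕ) : R) = ((a.choose (k - 1) * (a + 1 - k) : ℕ) : R) := by
    have n2 : a.choose k * k = a.choose (k - 1) * (a + 1 - k) := by
      obtain ⟨m, rfl⟩ : ∃ m, k = m + 1 := ⟨k - 1, by omega⟩
      rw [Nat.choose_succ_right_eq]
      simp only [Nat.add_sub_cancel]
      congr 1
      omega
    exact_mod_cast congrArg (Nat.cast : ℕ → R) n2
  push_cast at h e1 e2 ⊢
  linear_combination (((k₀ : R) + 1) * k) * h
    - ((a.choose (k - 1) : R) * k * P k₀ * P k) * e1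
    + ((a.choose k₀ : R) * ((k₀ : R) + 1) * P (k₀ + 1) * P (k - 1)) * e2
end

section
/- Under the Veronese-type relations, for all natural numbers k₀ ≤ a and k with 1 ≤ k ≤ a − k₀ one has C(a, k₀+k) · P(k₀) · l₁^{k₀+k} · l₂^{a−(k₀+k)} = C(a, k₀) · P(k₀+k) · l₁^{k₀} · l₂^{a−k₀}. (Equation (1) of Lemma B.2.) -/
/-- In a `ℚ`-algebra, nonzero natural numbers can be cancelled. -/
lemma btree_nat_cancel {R : Type*} [CommRing R] [Algebra ℚ R] {n : ℕ} (hn : n ≠ 0)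
    {x y : R} (h : (n : R) * x = (n : R) * y) : x = y := by
  have hu : IsUnit ((n : ℕ) : R) := by
    have h0 : ((n : ℚ)) ≠ 0 := by exact_mod_cast hn
    have := (isUnit_iff_ne_zero.mpr h0).map (algebraMap ℚ R)
    rwa [map_natCast] at this
  exact hu.mul_left_cancel h

/-- Termwise identity derived from the Veronese relations. -/
lemma btree_term {R : Type*} [CommRing R] [Algebra ℚ R]
    (a : ℕ) (P : ℕ → R)
    (hV : ∀ k₀ k : ℕ, k₀ < a → 1 ≤ k → k ≤ a →
      ((a.choose (k₀ + 1) * a.choose (k - 1) : ℕ) : R) * (P k₀ * P k) =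
        ((a.choose k₀ * a.choose k : ℕ) : R) * (P (k₀ + 1) * P (k - 1)))
    (k₀ κ : ℕ) (hk₀ : k₀ < a) (hκ1 : 1 ≤ κ) (hκ2 : κ ≤ a) :
    (κ : R) * ((a.choose (k₀ + 1) : R) * (P k₀ * P κ)) =
      ((a + 1 - κ : ℕ) : R) * ((a.choose k₀ : R) * (P (k₀ + 1) * P (κ - 1))) := by
  have h1 := hV k₀ κ hk₀ hκ1 hκ2
  push_cast at h1
  have hnat : κ * a.choose κ = (a + 1 - κ) * a.choose (κ - 1) := by
    obtain ⟨j, rfl⟩ : ∃ j, κ = j + 1 := ⟨κ - 1, by omega⟩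
    have h2 := Nat.choose_succ_right_eq a j
    have e1 : (j + 1 : ℕ) - 1 = j := by omega
    have e2 : a + 1 - (j + 1) = a - j := by omega
    rw [e1, e2]
    calc (j + 1) * a.choose (j + 1) = a.choose (j + 1) * (j + 1) := by ring
      _ = a.choose j * (a - j) := h2
      _ = (a - j) * a.choose j := by ring
  have hnatR : (κ : R) * (a.choose κ : R) =
      ((a + 1 - κ : ℕ) : R) * (a.choose (κ - 1) : R) := by exact_mod_cast congrArg (Nat.cast : ℕ → R) hnat
  have hc : (a.choose (κ - 1) : ℕ) ≠ 0 := (Nat.choose_pos (by omega)).ne'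
  apply btree_nat_cancel hc
  push_cast
  linear_combination (κ : R) * h1 + ((a.choose k₀ : R) * (P (k₀ + 1) * P (κ - 1))) * hnatR

/-- Key lemma: `C(a,k₀+1)·P(k₀)·l₁ = C(a,k₀)·P(k₀+1)·l₂`. -/
lemma btree_key {R : Type*} [CommRing R] [Algebra ℚ R]
    (a : ℕ) (P : ℕ → R)
    (hV : ∀ k₀ k : ℕ, k₀ < a → 1 ≤ k → k ≤ a →
      ((a.choose (k₀ + 1) * a.choose (k - 1) : ℕ) : R) * (P k₀ * P k) =
        ((a.choose k₀ * a.choose k : ℕ) : R) * (P (k₀ + 1) * P (k - 1)))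
    (k₀ : ℕ) (hk₀ : k₀ < a) :
    (a.choose (k₀ + 1) : R) * P k₀ * (∑ κ ∈ Finset.Icc 1 a, (κ : R) * P κ) =
      (a.choose k₀ : R) * P (k₀ + 1) * (∑ κ ∈ Finset.Icc 1 a, (κ : R) * P (a - κ)) := by
  calc (a.choose (k₀ + 1) : R) * P k₀ * (∑ κ ∈ Finset.Icc 1 a, (κ : R) * P κ)
      = ∑ κ ∈ Finset.Icc 1 a, (κ : R) * ((a.choose (k₀ + 1) : R) * (P k₀ * P κ)) := by
        rw [Finset.mul_sum]; apply Finset.sum_congr rfl; intro κ _; ring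
    _ = ∑ κ ∈ Finset.Icc 1 a, ((a + 1 - κ : ℕ) : R) * ((a.choose k₀ : R) * (P (k₀ + 1) * P (κ - 1))) := by
        apply Finset.sum_congr rfl
        intro κ hκ
        rw [Finset.mem_Icc] at hκ
        exact btree_term a P hV k₀ κ hk₀ hκ.1 hκ.2
    _ = ∑ κ ∈ Finset.Icc 1 a, (κ : R) * ((a.choose k₀ : R) * (P (k₀ + 1) * P (a - κ))) := by
        apply Finset.sum_nbij' (fun κ => a + 1 - κ) (fun κ => a + 1 - κ)
        · intro κ hκ; rw [Finset.mem_Icc] at hκ ⊢; omega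
        · intro κ hκ; rw [Finset.mem_Icc] at hκ ⊢; omega
        · intro κ hκ; rw [Finset.mem_Icc] at hκ; omega
        · intro κ hκ; rw [Finset.mem_Icc] at hκ; omega
        · intro κ hκ
          rw [Finset.mem_Icc] at hκ
          have : a - (a + 1 - κ) = κ - 1 := by omega
          rw [this]
    _ = (a.choose k₀ : R) * P (k₀ + 1) * (∑ κ ∈ Finset.Icc 1 a, (κ : R) * P (a - κ)) := by
        rw [Finset.mul_sum]; apply Finset.sum_congr rfl; intro κ _; ring

/-- Power form: `C(a,k₀+k)·P(k₀)·l₁^k = C(a,k₀)·P(k₀+k)·l₂^k`. -/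
lemma btree_pow_key {R : Type*} [CommRing R] [Algebra ℚ R]
    (a : ℕ) (P : ℕ → R)
    (hV : ∀ k₀ k : ℕ, k₀ < a → 1 ≤ k → k ≤ a →
      ((a.choose (k₀ + 1) * a.choose (k - 1) : ℕ) : R) * (P k₀ * P k) =
        ((a.choose k₀ * a.choose k : ℕ) : R) * (P (k₀ + 1) * P (k - 1)))
    (k₀ : ℕ) (k : ℕ) (hk1 : 1 ≤ k) (hk2 : k₀ + k ≤ a) :
    (a.choose (k₀ + k) : R) * P k₀ * (∑ κ ∈ Finset.Icc 1 a, (κ : R) * P κ) ^ k =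
      (a.choose k₀ : R) * P (k₀ + k) * (∑ κ ∈ Finset.Icc 1 a, (κ : R) * P (a - κ)) ^ k := by
  induction k with
  | zero => omega
  | succ k ih =>
    rcases Nat.eq_or_lt_of_le hk1 with h1 | h1
    · have hk : k = 0 := by omega
      subst hk
      simpa [pow_one] using btree_key a P hV k₀ (by omega)
    · have hk : 1 ≤ k := by omega
      have ihh := ih hk (by omega)
      have hkey := btree_key a P hV (k₀ + k) (by omega)
      have hc : a.choose (k₀ + k) ≠ 0 := (Nat.choose_pos (by omega)).ne'
      apply btree_nat_cancel hc
      have e : k₀ + (k + 1) = (k₀ + k) + 1 := by omega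
      rw [e]
      linear_combination ((a.choose (k₀ + k + 1) : R) *
          (∑ κ ∈ Finset.Icc 1 a, (κ : R) * P κ)) * ihh +
        ((a.choose k₀ : R) * (∑ κ ∈ Finset.Icc 1 a, (κ : R) * P (a - κ)) ^ k) * hkey

/-- Equation (1) of Lemma B.2: under the Veronese-type relations,
`C(a,k₀+k)·P(k₀)·l₁^{k₀+k}·l₂^{a−(k₀+k)} = C(a,k₀)·P(k₀+k)·l₁^{k₀}·l₂^{a−k₀}`. -/
theorem binary_tree_eq1 {R : Type*} [CommRing R] [Algebra ℚ R]
    (a : ℕ) (ha : 1 ≤ a) (P : ℕ → R)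
    (hV : ∀ k₀ k : ℕ, k₀ < a → 1 ≤ k → k ≤ a →
      ((a.choose (k₀ + 1) * a.choose (k - 1) : ℕ) : R) * (P k₀ * P k) =
        ((a.choose k₀ * a.choose k : ℕ) : R) * (P (k₀ + 1) * P (k - 1)))
    (k₀ : ℕ) (hk₀ : k₀ ≤ a) (k : ℕ) (hk1 : 1 ≤ k) (hk2 : k ≤ a - k₀) :
    ((a.choose (k₀ + k) : ℕ) : R) * P k₀ *
        (∑ κ ∈ Finset.Icc 1 a, (κ : R) * P κ) ^ (k₀ + k) *
        (∑ κ ∈ Finset.Icc 1 a, (κ : R) * P (a - κ)) ^ (a - (k₀ + k)) =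
      ((a.choose k₀ : ℕ) : R) * P (k₀ + k) *
        (∑ κ ∈ Finset.Icc 1 a, (κ : R) * P κ) ^ k₀ *
        (∑ κ ∈ Finset.Icc 1 a, (κ : R) * P (a - κ)) ^ (a - k₀) := by
  have h := btree_pow_key a P hV k₀ k hk1 (by omega)
  have e1 : (∑ κ ∈ Finset.Icc 1 a, (κ : R) * P κ) ^ (k₀ + k) =
      (∑ κ ∈ Finset.Icc 1 a, (κ : R) * P κ) ^ k₀ *
        (∑ κ ∈ Finset.Icc 1 a, (κ : R) * P κ) ^ k := pow_add _ _ _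
  have e2 : (∑ κ ∈ Finset.Icc 1 a, (κ : R) * P (a - κ)) ^ (a - k₀) =
      (∑ κ ∈ Finset.Icc 1 a, (κ : R) * P (a - κ)) ^ k *
        (∑ κ ∈ Finset.Icc 1 a, (κ : R) * P (a - κ)) ^ (a - (k₀ + k)) := by
    rw [← pow_add]; congr 1; omega
  rw [e1, e2]
  linear_combination ((∑ κ ∈ Finset.Icc 1 a, (κ : R) * P κ) ^ k₀ *
    (∑ κ ∈ Finset.Icc 1 a, (κ : R) * P (a - κ)) ^ (a - (k₀ + k))) * h
end

section
/- Let a', a, b', b, d, ℓ be natural numbers with a' ≤ a and b' ≤ b, and for each natural number k ≤ ℓ and all real numbers s₂, s₃, s₄, s₅ define T(k) = Σ_{j=0}^{bℓ−(b−b')k} C(bℓ−(b−b')k, j) · s₂^j · s₃^{bℓ−(b−b')k−j} · (s₄+s₅)^{(a+db)ℓ−((a+db)−(a'+db'))k−dj}. Then for all natural numbers k₁, k₂, k₃, k₄ ≤ ℓ with k₁ + k₂ = k₃ + k₄ and all real s₂, s₃, s₄, s₅: T(k₁)·T(k₂) = T(k₃)·T(k₄). (This is the computation showing that the root of the multinomial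 staged tree representing the prismatoid family is a balanced vertex, the key step in the proof of Proposition 5.4 that the prismatoid models are toric binary multinomial staged tree models; T(k) is the interpolating polynomial t(r(k, ℓ−k)) of the k-th child of the root.) -/
/-- Closed form of the inner sum. -/
lemma prismatoid_Tval (B E d : ℕ) (s₂ s₃ u : ℝ) :
    ∑ j ∈ Finset.range (B + 1),
        (B.choose j : ℝ) * s₂ ^ j * s₃ ^ (B - j) * u ^ (E + d * B - d * j)
      = u ^ E * (s₂ + s₃ * u ^ d) ^ B := by
  rw [add_pow, Finset.mul_sum]
  apply Finset.sum_congr rfl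
  intro j hj
  have hj' : j ≤ B := Finset.mem_range_succ_iff.mp hj
  have h1 : E + d * B - d * j = E + d * (B - j) := by
    have h2 : d * j ≤ d * B := Nat.mul_le_mul_left d hj'
    rw [Nat.mul_sub, Nat.add_sub_assoc h2]
  rw [h1, mul_pow, ← pow_mul, pow_add]
  ring

/-- The root of the multinomial staged tree representing the prismatoid family is a
balanced vertex (key step of Proposition 5.4): the interpolating polynomials
`T(k) = t(r(k, ℓ−k))` satisfy `T(k₁)·T(k₂) = T(k₃)·T(k₄)` whenever `k₁+k₂ = k₃+k₄`. -/
theorem prismatoid_root_balanced (a' a b' b d ℓ : ℕ) (ha : a' ≤ a) (hb : b' ≤ b)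
    (s₂ s₃ s₄ s₅ : ℝ) :
    let T : ℕ → ℝ := fun k =>
      ∑ j ∈ Finset.range (b * ℓ - (b - b') * k + 1),
        ((b * ℓ - (b - b') * k).choose j : ℝ) * s₂ ^ j * s₃ ^ (b * ℓ - (b - b') * k - j) *
          (s₄ + s₅) ^ ((a + d * b) * ℓ - ((a + d * b) - (a' + d * b')) * k - d * j)
    ∀ k₁ k₂ k₃ k₄ : ℕ, k₁ ≤ ℓ → k₂ ≤ ℓ → k₃ ≤ ℓ → k₄ ≤ ℓ → k₁ + k₂ = k₃ + k₄ →
      T k₁ * T k₂ = T k₃ * T k₄ := by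
  intro T k₁ k₂ k₃ k₄ h₁ h₂ h₃ h₄ hk
  set u := s₄ + s₅ with hu
  have hT : ∀ k, k ≤ ℓ →
      T k = u ^ (a * ℓ - (a - a') * k) * (s₂ + s₃ * u ^ d) ^ (b * ℓ - (b - b') * k) := by
    intro k hk'
    have hd : d * b' ≤ d * b := Nat.mul_le_mul_left d hb
    have hab : a' + d * b' ≤ a + d * b := Nat.add_le_add ha hd
    have c1 : ((a + d * b) - (a' + d * b')) * k ≤ (a + d * b) * ℓ :=
      Nat.mul_le_mul (Nat.sub_le _ _) hk'
    have c2 : (a - a') * k ≤ a * ℓ := Nat.mul_le_mul (Nat.sub_le _ _) hk'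
    have c3 : (b - b') * k ≤ b * ℓ := Nat.mul_le_mul (Nat.sub_le _ _) hk'
    have hEB : (a + d * b) * ℓ - ((a + d * b) - (a' + d * b')) * k
        = (a * ℓ - (a - a') * k) + d * (b * ℓ - (b - b') * k) := by
      zify [ha, hb, hab, c1, c2, c3]
      ring
    have := prismatoid_Tval (b * ℓ - (b - b') * k) (a * ℓ - (a - a') * k) d s₂ s₃ u
    rw [← hEB] at this
    exact this
  rw [hT k₁ h₁, hT k₂ h₂, hT k₃ h₃, hT k₄ h₄]
  have key : ∀ P x₁ x₂ x₃ x₄ : ℕ, x₁ ≤ P → x₂ ≤ P → x₃ ≤ P → x₄ ≤ P →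
      x₁ + x₂ = x₃ + x₄ → P - x₁ + (P - x₂) = P - x₃ + (P - x₄) := by
    intro P x₁ x₂ x₃ x₄ _ _ _ _ _; omega
  have hE : a * ℓ - (a - a') * k₁ + (a * ℓ - (a - a') * k₂)
      = a * ℓ - (a - a') * k₃ + (a * ℓ - (a - a') * k₄) := by
    apply key <;> first
      | exact Nat.mul_le_mul (Nat.sub_le _ _) ‹_›
      | rw [← Nat.mul_add, ← Nat.mul_add, hk]
  have hB : b * ℓ - (b - b') * k₁ + (b * ℓ - (b - b') * k₂)
      = b * ℓ - (b - b') * k₃ + (b * ℓ - (b - b') * k₄) := by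
    apply key <;> first
      | exact Nat.mul_le_mul (Nat.sub_le _ _) ‹_›
      | rw [← Nat.mul_add, ← Nat.mul_add, hk]
  calc u ^ (a * ℓ - (a - a') * k₁) * (s₂ + s₃ * u ^ d) ^ (b * ℓ - (b - b') * k₁) *
        (u ^ (a * ℓ - (a - a') * k₂) * (s₂ + s₃ * u ^ d) ^ (b * ℓ - (b - b') * k₂))
      = u ^ (a * ℓ - (a - a') * k₁ + (a * ℓ - (a - a') * k₂)) *
        (s₂ + s₃ * u ^ d) ^ (b * ℓ - (b - b') * k₁ + (b * ℓ - (b - b') * k₂)) := by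
        rw [pow_add, pow_add]; ring
    _ = u ^ (a * ℓ - (a - a') * k₃ + (a * ℓ - (a - a') * k₄)) *
        (s₂ + s₃ * u ^ d) ^ (b * ℓ - (b - b') * k₃ + (b * ℓ - (b - b') * k₄)) := by
        rw [hE, hB]
    _ = _ := by rw [pow_add, pow_add]; ring
end
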